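/- Fix n ≥ 2, let G be a graph, ω a placement function on G, and f : V(G) → V(C) satisfying (C1) and (C2). Suppose C(ℓ,j) with j ≥ 2 is a start-type reversal point: there exist wrapping patterns u_0,…,u_{k₁} and v_0,…,v_{k₂} in G with f(u_0) = f(v_0) = C(ℓ,j), f(u_1) = C(ℓ,j−1), and f(v_1) = C(ℓ,j+1). Then for any wrapping pattern w_0,…,w_k in G and any p ∈ {0,…,k}, if f(w_p) = C(ℓ,j) then p = 0. -/

import Mathlib

/-- Vertices of the infinite n-od graph `C`: a branch vertex, and nodes `C(ℓ,j)`
(intended for `1 ≤ ℓ ≤ n`, `j ≥ 1`). -/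
inductive NOdVert : Type where
  | branch : NOdVert
  | node : ℕ → ℕ → NOdVert
deriving DecidableEq

/-- `cv ℓ j` denotes the vertex `C(ℓ,j)`, where `C(ℓ,0)` is the branch vertex. -/
def cv (ℓ j : ℕ) : NOdVert := if j = 0 then NOdVert.branch else NOdVert.node ℓ j

/-- Adjacency in the infinite n-od `C`: `C(ℓ,j)` is adjacent to `C(ℓ,j+1)` for
`1 ≤ ℓ ≤ n` and `j ≥ 0` (the case `j = 0` gives branch–`C(ℓ,1)` edges). -/
def nodAdj (n : ℕ) (u v : NOdVert) : Prop :=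
  ∃ ℓ j, 1 ≤ ℓ ∧ ℓ ≤ n ∧
    ((u = cv ℓ j ∧ v = cv ℓ (j + 1)) ∨ (v = cv ℓ j ∧ u = cv ℓ (j + 1)))

/-- The point `b(i,t) = ((1+t)cos(iπ/n), (1+t)sin(iπ/n))` in the plane. -/
noncomputable def bpt (n i : ℕ) (t : ℝ) : ℝ × ℝ :=
  ((1 + t) * Real.cos (i * Real.pi / n), (1 + t) * Real.sin (i * Real.pi / n))

/-- The origin `o` of the plane. -/
def origin : ℝ × ℝ := (0, 0)

/-- A placement function: on each edge of `G`, one endpoint maps to `o` and the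
other to some `b(i,t)` with `i ∈ {0,…,n}`, `t ∈ [0,1]`. -/
def IsPlacement {V : Type*} (n : ℕ) (G : SimpleGraph V) (ω : V → ℝ × ℝ) : Prop :=
  ∀ u v, G.Adj u v →
    (ω u = origin ∧ ∃ i ≤ n, ∃ t ∈ Set.Icc (0 : ℝ) 1, ω v = bpt n i t) ∨
    (ω v = origin ∧ ∃ i ≤ n, ∃ t ∈ Set.Icc (0 : ℝ) 1, ω u = bpt n i t)

/-- Condition (C1). -/
def CondC1 {V : Type*} (n : ℕ) (ω : V → ℝ × ℝ) (f : V → NOdVert) : Prop :=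
  ∀ u v, f u = f v →
    (ω u = origin ∧ ω v = origin) ∨
    ∃ i ≤ n, ∃ s ∈ Set.Icc (0 : ℝ) 1, ∃ t ∈ Set.Icc (0 : ℝ) 1,
      ω u = bpt n i s ∧ ω v = bpt n i t

/-- Condition (C2): `f` maps adjacent vertices of `G` to adjacent vertices of `C`. -/
def CondC2 {V : Type*} (n : ℕ) (G : SimpleGraph V) (f : V → NOdVert) : Prop :=
  ∀ u v, G.Adj u v → nodAdj n (f u) (f v)

/-- `w 0, …, w k` is a wrapping pattern in `G` for the placement function `ω`. -/
def IsWrapping {V : Type*} (n : ℕ) (G : SimpleGraph V) (ω : V → ℝ × ℝ)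
    (w : ℕ → V) (k : ℕ) : Prop :=
  0 < k ∧ 2 * (n + 1) ∣ k ∧
  (∀ p < k, G.Adj (w p) (w (p + 1))) ∧
  (∀ q, 2 * q ≤ k → ∃ t ∈ Set.Icc (0 : ℝ) 1, ω (w (2 * q)) = bpt n (q % (n + 1)) t) ∧
  (∀ q, 2 * q + 1 ≤ k → ω (w (2 * q + 1)) = origin)

/-- The branch-star of `C`: the branch vertex together with `C(ℓ,1)`, `1 ≤ ℓ ≤ n`. -/
def branchStar (n : ℕ) : Set NOdVert :=
  {NOdVert.branch} ∪ {x | ∃ ℓ, 1 ≤ ℓ ∧ ℓ ≤ n ∧ x = NOdVert.node ℓ 1}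

/-!
Every vertex that `f` sends to `C(ℓ,j)` is placed on ray `0`, because `u 0` is. An odd-indexed
`w p` sits at the origin, so `p` is even, and then ray `p/2 mod (n+1) = 0` forces `w (p-2)` onto
ray `n`. Now `C(ℓ,j)` has only the two neighbours `f (u 1)` and `f (v 1)`, so `f (w (p-1))` is one
of them, say `f (x 1)` with `x ∈ {u, v}`. The node `f (x 1)` has at most two neighbours, yet it is
adjacent to the images of `x 0`, `x 2` and `w (p-2)`, which lie on the three distinct rays `0`,
`1`, `n`; two of these images coincide, contradicting (C1).
-/

lemma bpt_fst_sq_add_snd_sq (n i : ℕ) (t : ℝ) :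
    (bpt n i t).1 ^ 2 + (bpt n i t).2 ^ 2 = (1 + t) ^ 2 := by
  simp only [bpt, mul_pow, ← mul_add, Real.cos_sq_add_sin_sq, mul_one]

lemma bpt_ne_origin {n i : ℕ} {t : ℝ} (ht : 0 ≤ t) : bpt n i t ≠ origin := by
  intro h
  have hr := bpt_fst_sq_add_snd_sq n i t
  simp only [h, origin] at hr
  nlinarith

lemma eq_of_bpt_eq {n i i' : ℕ} {s t : ℝ} (hn : 0 < n) (hi : i ≤ n) (hi' : i' ≤ n)
    (hs : 0 ≤ s) (ht : 0 ≤ t) (h : bpt n i s = bpt n i' t) : i = i' := by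
  have hst : 1 + s = 1 + t := by
    have hr := congrArg (fun z : ℝ × ℝ => z.1 ^ 2 + z.2 ^ 2) h
    simp only [bpt_fst_sq_add_snd_sq] at hr
    nlinarith
  have hcos : Real.cos (i * Real.pi / n) = Real.cos (i' * Real.pi / n) := by
    have hfst : (1 + s) * _ = (1 + t) * _ := congrArg Prod.fst h
    rw [hst] at hfst
    exact mul_left_cancel₀ (by linarith) hfst
  have hn' : (0 : ℝ) < n := by exact_mod_cast hn
  have mem_Icc : ∀ m : ℕ, m ≤ n → (m : ℝ) * Real.pi / n ∈ Set.Icc 0 Real.pi := fun m hm =>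
    ⟨by positivity, by
      rw [div_le_iff₀ hn', mul_comm]
      exact mul_le_mul_of_nonneg_left (by exact_mod_cast hm) Real.pi_pos.le⟩
  have hangle := Real.injOn_cos (mem_Icc i hi) (mem_Icc i' hi') hcos
  rw [div_left_inj' hn'.ne', mul_left_inj' Real.pi_ne_zero] at hangle
  exact_mod_cast hangle

def OnRay {V : Type*} (n : ℕ) (ω : V → ℝ × ℝ) (x : V) (i : ℕ) : Prop :=
  ∃ t ∈ Set.Icc (0 : ℝ) 1, ω x = bpt n i t

section Placement

variable {V : Type*} {n : ℕ} {G : SimpleGraph V} {ω : V → ℝ × ℝ} {f : V → NOdVert}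

lemma OnRay.ne_origin {x : V} {i : ℕ} (hx : OnRay n ω x i) : ω x ≠ origin := by
  obtain ⟨t, ht, hxt⟩ := hx
  exact hxt ▸ bpt_ne_origin ht.1

lemma CondC1.eq_of_onRay (hf : CondC1 n ω f) (hn : 0 < n) {x y : V} {i i' : ℕ}
    (hxy : f x = f y) (hx : OnRay n ω x i) (hy : OnRay n ω y i') (hi : i ≤ n) (hi' : i' ≤ n) :
    i = i' := by
  rcases hf x y hxy with ⟨hx0, -⟩ | ⟨r, hr, s, hs, t, ht, hxs, hyt⟩
  · exact absurd hx0 hx.ne_origin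
  · obtain ⟨s', hs', hxs'⟩ := hx
    obtain ⟨t', ht', hyt'⟩ := hy
    rw [eq_of_bpt_eq hn hi hr hs'.1 hs.1 (hxs' ▸ hxs),
      eq_of_bpt_eq hn hi' hr ht'.1 ht.1 (hyt' ▸ hyt)]

lemma CondC1.ne_origin_of_onRay (hf : CondC1 n ω f) {x y : V} {i : ℕ}
    (hxy : f x = f y) (hy : OnRay n ω y i) : ω x ≠ origin := by
  rcases hf x y hxy with ⟨-, hy0⟩ | ⟨r, -, s, hs, -, -, hxs, -⟩
  · exact absurd hy0 hy.ne_origin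
  · exact hxs ▸ bpt_ne_origin hs.1

namespace IsWrapping

variable {w : ℕ → V} {k : ℕ}

lemma adj (hw : IsWrapping n G ω w k) {p : ℕ} (hp : p < k) : G.Adj (w p) (w (p + 1)) :=
  hw.2.2.1 p hp

lemma onRay (hw : IsWrapping n G ω w k) {q : ℕ} (hq : 2 * q ≤ k) :
    OnRay n ω (w (2 * q)) (q % (n + 1)) :=
  hw.2.2.2.1 q hq

lemma origin_eq (hw : IsWrapping n G ω w k) {q : ℕ} (hq : 2 * q + 1 ≤ k) :
    ω (w (2 * q + 1)) = origin :=
  hw.2.2.2.2 q hq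

lemma two_le (hw : IsWrapping n G ω w k) : 2 ≤ k :=
  le_trans (by omega) (Nat.le_of_dvd hw.1 hw.2.1)

lemma onRay_zero (hw : IsWrapping n G ω w k) : OnRay n ω (w 0) 0 := by
  simpa using hw.onRay (q := 0) (by omega)

end IsWrapping

end Placement

lemma nodAdj_symm {n : ℕ} {a b : NOdVert} (h : nodAdj n a b) : nodAdj n b a := by
  obtain ⟨ℓ, j, h1, h2, h3⟩ := h
  exact ⟨ℓ, j, h1, h2, h3.symm⟩

lemma nodAdj_node {n ℓ m : ℕ} {a : NOdVert} (h : nodAdj n a (.node ℓ m)) :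
    a = cv ℓ (m - 1) ∨ a = cv ℓ (m + 1) := by
  obtain ⟨ℓ', j', -, -, ⟨ha, hb⟩ | ⟨hb, ha⟩⟩ := h
  · simp only [cv, Nat.add_one_ne_zero, if_false, NOdVert.node.injEq] at hb
    obtain ⟨rfl, rfl⟩ := hb
    exact Or.inl (by simpa using ha)
  · unfold cv at hb
    split_ifs at hb
    obtain ⟨rfl, rfl⟩ := NOdVert.node.inj hb
    exact Or.inr ha

lemma eq_or_eq_or_eq_of_nodAdj_node {n ℓ m : ℕ} {a b c : NOdVert}
    (ha : nodAdj n a (.node ℓ m)) (hb : nodAdj n b (.node ℓ m)) (hc : nodAdj n c (.node ℓ m)) :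
    a = b ∨ a = c ∨ b = c := by
  rcases nodAdj_node ha with rfl | rfl <;> rcases nodAdj_node hb with rfl | rfl <;>
    rcases nodAdj_node hc with rfl | rfl <;> simp

lemma IsWrapping.not_nodAdj_apply_one {V : Type*} {n : ℕ} (hn : 2 ≤ n) {G : SimpleGraph V}
    {ω : V → ℝ × ℝ} {f : V → NOdVert} (h1 : CondC1 n ω f) (h2 : CondC2 n G f)
    {x : ℕ → V} {k ℓ m : ℕ} (hx : IsWrapping n G ω x k) (hx1 : f (x 1) = .node ℓ m)
    {y : V} (hy : OnRay n ω y n) : ¬ nodAdj n (f y) (f (x 1)) := by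
  intro hy1
  have hk := hx.two_le
  have hx0 : nodAdj n (f (x 0)) (f (x 1)) := h2 _ _ (hx.adj (by omega))
  have hx2 : nodAdj n (f (x 2)) (f (x 1)) := nodAdj_symm (h2 _ _ (hx.adj (by omega)))
  have hx2ray : OnRay n ω (x 2) 1 := by
    simpa [Nat.mod_eq_of_lt (show 1 < n + 1 by omega)] using hx.onRay (q := 1) (by omega)
  rw [hx1] at hx0 hx2 hy1
  rcases eq_or_eq_or_eq_of_nodAdj_node hx0 hx2 hy1 with h | h | h
  · have := h1.eq_of_onRay (by omega) h hx.onRay_zero hx2ray (by omega) (by omega)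
    omega
  · have := h1.eq_of_onRay (by omega) h hx.onRay_zero hy (by omega) le_rfl
    omega
  · have := h1.eq_of_onRay (by omega) h hx2ray hy (by omega) le_rfl
    omega

theorem stmt10_general {V : Type*} (n : ℕ) (hn : 2 ≤ n) (G : SimpleGraph V)
    (ω : V → ℝ × ℝ)
    (f : V → NOdVert) (h1 : CondC1 n ω f) (h2 : CondC2 n G f)
    (ℓ j : ℕ)
    (u v : ℕ → V) (k₁ k₂ : ℕ)
    (hu : IsWrapping n G ω u k₁) (hv : IsWrapping n G ω v k₂)
    (hu0 : f (u 0) = NOdVert.node ℓ j) (hv0 : f (v 0) = NOdVert.node ℓ j)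
    (hu1 : f (u 1) = NOdVert.node ℓ (j - 1)) (hv1 : f (v 1) = NOdVert.node ℓ (j + 1))
    (w : ℕ → V) (k : ℕ) (hw : IsWrapping n G ω w k)
    (p : ℕ) (hp : p ≤ k) (hfp : f (w p) = NOdVert.node ℓ j) :
    p = 0 := by
  have hfpu := hfp.trans hu0.symm
  by_contra hp0
  obtain ⟨q, rfl | rfl⟩ := Nat.even_or_odd' p
  · obtain ⟨q, rfl⟩ := Nat.exists_eq_succ_of_ne_zero (by omega : q ≠ 0)
    have hq : (q + 1) % (n + 1) = 0 :=
      h1.eq_of_onRay (by omega) hfpu (hw.onRay hp) hu.onRay_zero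
        (Nat.le_of_lt_succ (Nat.mod_lt _ n.succ_pos)) (Nat.zero_le n)
    have hprev : OnRay n ω (w (2 * q)) n := by
      simpa only [Nat.succ_mod_succ_eq_zero_iff.mp hq] using hw.onRay (q := q) (by omega)
    have hprev_adj : nodAdj n (f (w (2 * q))) (f (w (2 * q + 1))) := h2 _ _ (hw.adj (by omega))
    have hmid : nodAdj n (f (w (2 * q + 1))) (.node ℓ j) := hfp ▸ h2 _ _ (hw.adj (by omega))
    have hu1_adj : nodAdj n (f (u 1)) (.node ℓ j) := hu0 ▸ nodAdj_symm (h2 _ _ (hu.adj hu.1))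
    have hv1_adj : nodAdj n (f (v 1)) (.node ℓ j) := hv0 ▸ nodAdj_symm (h2 _ _ (hv.adj hv.1))
    rcases eq_or_eq_or_eq_of_nodAdj_node hmid hu1_adj hv1_adj with h | h | h
    · exact hu.not_nodAdj_apply_one hn h1 h2 hu1 hprev (h ▸ hprev_adj)
    · exact hv.not_nodAdj_apply_one hn h1 h2 hv1 hprev (h ▸ hprev_adj)
    · rw [hu1, hv1, NOdVert.node.injEq] at h
      omega
  · exact h1.ne_origin_of_onRay hfpu hu.onRay_zero (hw.origin_eq hp)

theorem stmt10 {V : Type*} (n : ℕ) (hn : 2 ≤ n) (G : SimpleGraph V)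
    (ω : V → ℝ × ℝ) (hω : IsPlacement n G ω)
    (f : V → NOdVert) (h1 : CondC1 n ω f) (h2 : CondC2 n G f)
    (ℓ j : ℕ) (hℓ1 : 1 ≤ ℓ) (hℓn : ℓ ≤ n) (hj : 2 ≤ j)
    (u v : ℕ → V) (k₁ k₂ : ℕ)
    (hu : IsWrapping n G ω u k₁) (hv : IsWrapping n G ω v k₂)
    (hu0 : f (u 0) = NOdVert.node ℓ j) (hv0 : f (v 0) = NOdVert.node ℓ j)
    (hu1 : f (u 1) = NOdVert.node ℓ (j - 1)) (hv1 : f (v 1) = NOdVert.node ℓ (j + 1))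
    (w : ℕ → V) (k : ℕ) (hw : IsWrapping n G ω w k)
    (p : ℕ) (hp : p ≤ k) (hfp : f (w p) = NOdVert.node ℓ j) :
    p = 0 :=
  stmt10_general n hn G ω f h1 h2 ℓ j u v k₁ k₂ hu hv hu0 hv0 hu1 hv1 w k hw p hp hfp
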